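/- arXiv:1310.0965 — 2 statements merged into one kernel-verified Lean document; each statement's English description precedes it below -/
import Mathlib

section
/- Let f : ℝ → ℝ be twice continuously differentiable with liminf_{|s|→∞} f'(s) > 0 (i.e. there exist δ > 0 and R > 0 such that f'(s) ≥ δ whenever |s| ≥ R), and suppose there exist c_f > 0 and p ≥ 0 such that |f''(y)| ≤ c_f(1 + |y|^p) for all y ∈ ℝ. Let F(y) = ∫₀^y f(s) ds. Then for every M₀ ∈ ℝ there exist constants c₂ > 0, c₃ > 0 and c₄ > 0 such that (y − M₀) f(y) ≥ c₂ (y − M₀)² + c₃ F(y) − c₄ for all y ∈ ℝ. -/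
/-!
With `c₂ = δ / 2` and `c₃ = 1` the claim says that
`Φ(y) = (y - M₀) f(y) - δ / 2 (y - M₀)² - F(y)` is bounded below. Since
`Φ'(y) = (y - M₀) (f'(y) - δ)`, the function `Φ` is antitone for `y ≤ min (-R) M₀` and monotone
for `y ≥ max R M₀`; being continuous, it is bounded below on the compact interval in between,
hence everywhere.
-/

open Set

theorem Continuous.bddBelow_range_of_antitoneOn_Iic_of_monotoneOn_Ici
    {α β : Type*} [LinearOrder α] [TopologicalSpace α] [CompactIccSpace α]
    [LinearOrder β] [TopologicalSpace β] [ClosedIicTopology β]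
    {φ : α → β} (hφ : Continuous φ) {a b : α}
    (ha : AntitoneOn φ (Iic a)) (hb : MonotoneOn φ (Ici b)) : BddBelow (range φ) := by
  have : Nonempty β := ⟨φ a⟩
  obtain ⟨m, hm⟩ := isCompact_Icc.bddBelow_image (K := Icc a b) hφ.continuousOn
  refine ⟨min m (min (φ a) (φ b)), ?_⟩
  rintro _ ⟨y, rfl⟩
  rcases le_total y a with hya | hay
  · exact (min_le_right _ _).trans <| (min_le_left _ _).trans <|
      ha (mem_Iic.2 hya) (mem_Iic.2 le_rfl) hya
  rcases le_total b y with hby | hyb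
  · exact (min_le_right _ _).trans <| (min_le_right _ _).trans <|
      hb (mem_Ici.2 le_rfl) (mem_Ici.2 hby) hby
  · exact (min_le_left _ _).trans (hm ⟨y, ⟨hay, hyb⟩, rfl⟩)

theorem hasDerivAt_mul_sub_sq_sub_integral {f : ℝ → ℝ} (hf : Differentiable ℝ f)
    (c M₀ y : ℝ) :
    HasDerivAt (fun x => (x - M₀) * f x - c / 2 * (x - M₀) ^ 2 - ∫ s in (0:ℝ)..x, f s)
      ((y - M₀) * (deriv f y - c)) y := by
  have hM₀ := (hasDerivAt_id y).sub_const M₀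
  have hF := (hf.continuous.integral_hasStrictDerivAt 0 y).hasDerivAt
  refine (((hM₀.mul (hf y).hasDerivAt).sub ((hM₀.pow 2).const_mul (c / 2))).sub hF).congr_deriv ?_
  simp only [id, Nat.cast_ofNat]
  ring

theorem bddBelow_range_mul_sub_sq_sub_integral {f : ℝ → ℝ} (hf : Differentiable ℝ f)
    {δ R : ℝ} (hdiss : ∀ s : ℝ, R ≤ |s| → δ ≤ deriv f s) (M₀ : ℝ) :
    BddBelow (range fun y =>
      (y - M₀) * f y - δ / 2 * (y - M₀) ^ 2 - ∫ s in (0:ℝ)..y, f s) := by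
  have hΦ := hasDerivAt_mul_sub_sq_sub_integral hf δ M₀
  have hcont : Continuous fun y =>
      (y - M₀) * f y - δ / 2 * (y - M₀) ^ 2 - ∫ s in (0:ℝ)..y, f s :=
    continuous_iff_continuousAt.2 fun y => (hΦ y).continuousAt
  refine hcont.bddBelow_range_of_antitoneOn_Iic_of_monotoneOn_Ici
    (a := min (-R) M₀) (b := max R M₀) ?_ ?_
  · refine antitoneOn_of_hasDerivWithinAt_nonpos (convex_Iic _) hcont.continuousOn
      (fun y _ => (hΦ y).hasDerivWithinAt) fun y hy => ?_
    rw [interior_Iic, mem_Iio, lt_min_iff] at hy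
    have hRy : R ≤ |y| := (le_neg.1 hy.1.le).trans (neg_le_abs y)
    exact mul_nonpos_of_nonpos_of_nonneg (by linarith) (sub_nonneg.2 (hdiss y hRy))
  · refine monotoneOn_of_hasDerivWithinAt_nonneg (convex_Ici _) hcont.continuousOn
      (fun y _ => (hΦ y).hasDerivWithinAt) fun y hy => ?_
    rw [interior_Ici, mem_Ioi, max_lt_iff] at hy
    have hRy : R ≤ |y| := hy.1.le.trans (le_abs_self y)
    exact mul_nonneg (by linarith) (sub_nonneg.2 (hdiss y hRy))

theorem remark_2_1_2_general (f : ℝ → ℝ) (hf : ContDiff ℝ 2 f)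
    (hdiss : ∃ δ > (0:ℝ), ∃ R > (0:ℝ), ∀ s : ℝ, R ≤ |s| → δ ≤ deriv f s) :
    ∀ M₀ : ℝ, ∃ c₂ > (0:ℝ), ∃ c₃ > (0:ℝ), ∃ c₄ > (0:ℝ), ∀ y : ℝ,
      c₂ * (y - M₀) ^ 2 + c₃ * (∫ s in (0:ℝ)..y, f s) - c₄ ≤ (y - M₀) * f y := by
  obtain ⟨δ, hδ, R, -, hdiss⟩ := hdiss
  intro M₀
  obtain ⟨m, hm⟩ :=
    bddBelow_range_mul_sub_sq_sub_integral (hf.differentiable two_ne_zero) hdiss M₀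
  refine ⟨δ / 2, half_pos hδ, 1, one_pos, |m| + 1, by positivity, fun y => ?_⟩
  have hmy := hm ⟨y, rfl⟩
  linarith [neg_abs_le m]

/-- Remark 2.1(2): under (H1)-(H3), for every `M₀` there are constants `c₂, c₃, c₄ > 0` with
`(y − M₀) f(y) ≥ c₂ (y − M₀)² + c₃ F(y) − c₄` for all `y`, where `F(y) = ∫₀^y f(s) ds`. -/
theorem remark_2_1_2 (f : ℝ → ℝ) (hf : ContDiff ℝ 2 f)
    (hdiss : ∃ δ > (0:ℝ), ∃ R > (0:ℝ), ∀ s : ℝ, R ≤ |s| → δ ≤ deriv f s)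
    (c_f p : ℝ) (hcf : 0 < c_f) (hp : 0 ≤ p)
    (hgrowth : ∀ y : ℝ, |deriv (deriv f) y| ≤ c_f * (1 + |y| ^ p)) :
    ∀ M₀ : ℝ, ∃ c₂ > (0:ℝ), ∃ c₃ > (0:ℝ), ∃ c₄ > (0:ℝ), ∀ y : ℝ,
      c₂ * (y - M₀) ^ 2 + c₃ * (∫ s in (0:ℝ)..y, f s) - c₄ ≤ (y - M₀) * f y :=
  remark_2_1_2_general f hf hdiss
end

section
/- Let f : ℝ → ℝ be twice continuously differentiable with liminf_{|s|→∞} f'(s) > 0 (i.e. there exist δ > 0 and R > 0 such that f'(s) ≥ δ whenever |s| ≥ R), and suppose there exist c_f > 0 and p ∈ [0,1] such that |f''(y)| ≤ c_f(1 + |y|^p) for all y ∈ ℝ. Let F(y) = ∫₀^y f(s) ds. Then for every ε > 0 there exists a constant c_ε > 0 such that |f(y)| ≤ ε F(y) + c_ε for all y ∈ ℝ. -/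
/-!
Away from a compact set `f' ≥ δ`, so `f` is eventually positive to the right and negative to
the left; hence `F` is bounded below and grows at least quadratically to the right. To bound
`f Y` for large `Y`, compare `∫_{Y-w}^{Y} f` with the trapezoid rule: the error is controlled by
`sup |f''| · w³`, which is linear in `Y` because `p ≤ 1`. With `w = 4/ε` this gives
`f Y ≤ (ε/2) F Y + O(1 + Y)`, and the linear term is absorbed by `(ε/2) F Y`. The bound for
`-f` follows by applying this to `y ↦ -f (-y)`, whose primitive at `-y` is `F y`.
-/

open Set

theorem Real.rpow_le_one_add {x p : ℝ} (hx : 0 ≤ x) (hp0 : 0 ≤ p) (hp1 : p ≤ 1) :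
    x ^ p ≤ 1 + x := by
  rcases le_total x 1 with h | h
  · linarith [Real.rpow_le_one hx h hp0]
  · linarith [Real.rpow_le_self_of_one_le h hp1]

section Reflection

variable (f : ℝ → ℝ)

theorem deriv_neg_comp_neg : deriv (fun y => -f (-y)) = fun y => deriv f (-y) := by
  funext y
  rw [deriv.fun_neg, deriv_comp_neg, neg_neg]

theorem deriv_deriv_neg_comp_neg (y : ℝ) :
    deriv (deriv fun y => -f (-y)) y = -deriv (deriv f) (-y) := by
  rw [deriv_neg_comp_neg, deriv_comp_neg]

theorem integral_neg_comp_neg (y : ℝ) :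
    ∫ s in (0:ℝ)..-y, -f (-s) = ∫ s in (0:ℝ)..y, f s := by
  rw [intervalIntegral.integral_neg, intervalIntegral.integral_comp_neg,
    intervalIntegral.integral_symm]
  simp

end Reflection

theorem exists_mul_sub_le_of_le_deriv {f : ℝ → ℝ} (hf : Differentiable ℝ f) {δ R : ℝ}
    (hδ : 0 < δ) (h : ∀ s, R ≤ s → δ ≤ deriv f s) :
    ∃ r ≥ R, ∀ y, r ≤ y → δ * (y - r) ≤ f y := by
  have hr : R ≤ R + |f R| / δ := le_add_of_nonneg_right (by positivity)
  refine ⟨R + |f R| / δ, hr, fun y hy => ?_⟩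
  have hslope := (convex_Ici R).mul_sub_le_image_sub_of_le_deriv hf.continuous.continuousOn
    hf.differentiableOn (fun t ht => h t (interior_subset ht)) R (mem_Ici.2 le_rfl) y
    (hr.trans hy) (hr.trans hy)
  have hcancel : δ * (|f R| / δ) = |f R| := by field_simp
  nlinarith [neg_abs_le (f R)]

theorem exists_le_mul_sub_of_le_deriv {f : ℝ → ℝ} (hf : Differentiable ℝ f) {δ R : ℝ}
    (hδ : 0 < δ) (h : ∀ s, s ≤ R → δ ≤ deriv f s) :
    ∃ r ≤ R, ∀ y, y ≤ r → f y ≤ δ * (y - r) := by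
  obtain ⟨r, hr, H⟩ := exists_mul_sub_le_of_le_deriv (f := fun y => -f (-y)) (R := -R)
    (hf.comp differentiable_neg).neg hδ
    (fun s hs => by rw [deriv_neg_comp_neg]; exact h (-s) (by linarith))
  refine ⟨-r, by linarith, fun y hy => ?_⟩
  have := H (-y) (by linarith)
  rw [neg_neg] at this
  linarith

theorem bddAbove_image_Iic_of_nonpos {f : ℝ → ℝ} (hf : Continuous f) {a : ℝ}
    (hneg : ∀ y, y ≤ a → f y ≤ 0) (b : ℝ) : BddAbove (f '' Iic b) := by
  obtain ⟨B, hB⟩ := (isCompact_Icc (a := a) (b := b)).bddAbove_image hf.continuousOn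
  refine ⟨max B 0, ?_⟩
  rintro _ ⟨y, hy, rfl⟩
  rcases le_or_gt y a with h | h
  · exact (hneg y h).trans (le_max_right _ _)
  · exact (hB (mem_image_of_mem f ⟨h.le, hy⟩)).trans (le_max_left _ _)

theorem bddBelow_range_integral_of_nonpos_of_nonneg {f : ℝ → ℝ} (hf : Continuous f)
    {a b : ℝ} (hab : a ≤ b) (hneg : ∀ y, y ≤ a → f y ≤ 0) (hpos : ∀ y, b ≤ y → 0 ≤ f y) :
    BddBelow (range fun y => ∫ s in (0:ℝ)..y, f s) := by
  have hint : ∀ a b : ℝ, IntervalIntegrable f MeasureTheory.volume a b :=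
    fun _ _ => hf.intervalIntegrable _ _
  obtain ⟨C, hC⟩ := (isCompact_Icc (a := a) (b := b)).bddBelow_image
    (intervalIntegral.continuous_primitive hint 0).continuousOn
  refine ⟨C, ?_⟩
  rintro _ ⟨y, rfl⟩
  show C ≤ ∫ s in (0:ℝ)..y, f s
  rcases le_or_gt y a with hya | hya
  · have hCa := hC (mem_image_of_mem _ ⟨le_rfl, hab⟩ : _ ∈ _ '' Icc a b)
    rw [← intervalIntegral.integral_add_adjacent_intervals (hint 0 y) (hint y a)] at hCa
    have := intervalIntegral.integral_mono_on hya (hint y a) intervalIntegrable_const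
      fun u hu => hneg u hu.2
    simp only [intervalIntegral.integral_zero] at this
    linarith
  rcases le_or_gt b y with hby | hby
  · have hCb := hC (mem_image_of_mem _ ⟨hab, le_rfl⟩ : _ ∈ _ '' Icc a b)
    rw [← intervalIntegral.integral_add_adjacent_intervals (hint 0 b) (hint b y)]
    linarith [intervalIntegral.integral_nonneg (μ := MeasureTheory.volume) hby
      fun u hu => hpos u hu.1]
  · exact hC (mem_image_of_mem _ ⟨hya.le, hby.le⟩)

theorem mul_sq_le_integral_of_mul_sub_le {f : ℝ → ℝ} (hf : Continuous f) {δ r y : ℝ}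
    (hry : r ≤ y) (h : ∀ s ∈ Icc r y, δ * (s - r) ≤ f s) :
    δ * (y - r) ^ 2 / 2 ≤ ∫ s in r..y, f s :=
  calc δ * (y - r) ^ 2 / 2 = ∫ s in r..y, δ * (s - r) := by
        simp only [intervalIntegral.integral_const_mul, intervalIntegral.intervalIntegrable_id,
          intervalIntegrable_const, intervalIntegral.integral_sub, integral_id,
          intervalIntegral.integral_const, smul_eq_mul]
        ring
    _ ≤ ∫ s in r..y, f s := intervalIntegral.integral_mono_on hry
        (by apply Continuous.intervalIntegrable; fun_prop) (hf.intervalIntegrable _ _) h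

theorem trapezoid_sub_le_integral {f : ℝ → ℝ} (hf : Differentiable ℝ f)
    (hf' : Differentiable ℝ (deriv f)) {a b M : ℝ} (hab : a ≤ b)
    (hM : ∀ t ∈ Icc a b, |deriv (deriv f) t| ≤ M) :
    (b - a) / 2 * (f a + f b) - M * (b - a) ^ 3 ≤ ∫ s in a..b, f s := by
  have hb : b ∈ Icc a b := right_mem_Icc.2 hab
  have hslope : ∀ t ∈ Icc a b, |deriv f t - deriv f b| ≤ M * (b - a) := by
    intro t ht
    have hM0 : 0 ≤ M := (abs_nonneg _).trans (hM b hb)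
    calc |deriv f t - deriv f b| ≤ M * |t - b| :=
          (convex_Icc a b).norm_image_sub_le_of_norm_deriv_le (fun x _ => hf' x) hM hb ht
      _ ≤ M * (b - a) := by
          gcongr
          rw [abs_le]; constructor <;> linarith [ht.1, ht.2]
  set K := deriv f b + M * (b - a)
  have hD : (deriv f b - M * (b - a)) * (b - a) ≤ f b - f a :=
    (convex_Icc a b).mul_sub_le_image_sub_of_le_deriv hf.continuous.continuousOn
      hf.differentiableOn (fun t ht => by linarith [(abs_le.1 (hslope t (interior_subset ht))).1])
      a (left_mem_Icc.2 hab) b hb hab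
  have hpt : ∀ s ∈ Icc a b, f b - K * (b - s) ≤ f s := by
    intro s hs
    have := (convex_Icc a b).image_sub_le_mul_sub_of_deriv_le (C := K)
      hf.continuous.continuousOn hf.differentiableOn
      (fun t ht => by linarith [(abs_le.1 (hslope t (interior_subset ht))).2]) s hs b hb hs.2
    linarith
  have hlin : ∫ s in a..b, (f b - K * (b - s)) = (b - a) * f b - K * ((b - a) ^ 2 / 2) := by
    rw [intervalIntegral.integral_sub intervalIntegrable_const
      (by apply Continuous.intervalIntegrable; fun_prop), intervalIntegral.integral_const_mul,
      intervalIntegral.integral_comp_sub_left (fun x => x)]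
    simp
  have hint : ∫ s in a..b, (f b - K * (b - s)) ≤ ∫ s in a..b, f s :=
    intervalIntegral.integral_mono_on hab (by apply Continuous.intervalIntegrable; fun_prop)
      (hf.continuous.intervalIntegrable _ _) hpt
  rw [hlin] at hint
  nlinarith [mul_le_mul_of_nonneg_left hD (by linarith : 0 ≤ (b - a) / 2)]

theorem exists_le_mul_integral_add_of_le {f : ℝ → ℝ} (hf : Differentiable ℝ f)
    (hf' : Differentiable ℝ (deriv f)) {δ r K C ε : ℝ} (hδ : 0 < δ) (hr : 0 ≤ r)
    (hright : ∀ y, r ≤ y → δ * (y - r) ≤ f y)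
    (hgrowth : ∀ y, |deriv (deriv f) y| ≤ K * (1 + |y|))
    (hC : ∀ y, C ≤ ∫ s in (0:ℝ)..y, f s) (hε : 0 < ε) :
    ∃ c, ∀ y, r + 4 / ε ≤ y → f y ≤ ε * (∫ s in (0:ℝ)..y, f s) + c := by
  set w := 4 / ε with hw
  set L := 2 * K * w ^ 2
  refine ⟨L * (1 + r) + L ^ 2 / (ε * δ) - ε * C, fun Y hY => ?_⟩
  have hint : ∀ a b : ℝ, IntervalIntegrable f MeasureTheory.volume a b :=
    fun _ _ => hf.continuous.intervalIntegrable _ _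
  have hw0 : 0 < w := by positivity
  have hK : 0 ≤ K := by simpa using (abs_nonneg _).trans (hgrowth 0)
  have hra : r ≤ Y - w := by linarith
  have hrY : r ≤ Y := by linarith
  have hM : ∀ t ∈ Icc (Y - w) Y, |deriv (deriv f) t| ≤ K * (1 + Y) := fun t ht =>
    (hgrowth t).trans (by rw [abs_of_nonneg (by linarith [ht.1])]; gcongr; exact ht.2)
  have htrap := trapezoid_sub_le_integral hf hf' (by linarith) hM
  rw [← intervalIntegral.integral_interval_sub_left (hint 0 Y) (hint 0 (Y - w)), sub_sub_cancel]
    at htrap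
  have hfa : 0 ≤ f (Y - w) := (mul_nonneg hδ.le (sub_nonneg.2 hra)).trans (hright _ hra)
  have hFY : C + δ * (Y - r) ^ 2 / 2 ≤ ∫ s in (0:ℝ)..Y, f s := by
    rw [← intervalIntegral.integral_add_adjacent_intervals (hint 0 r) (hint r Y)]
    linarith [hC r, mul_sq_le_integral_of_mul_sub_le hf.continuous hrY
      (fun s hs => hright s hs.1)]
  have hwindow : f Y ≤ ε / 2 * ((∫ s in (0:ℝ)..Y, f s) - C) + L * (1 + Y) := by
    have hεw : ε * w = 4 := by rw [hw]; field_simp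
    have hscale : ε / 2 * (w / 2 * (f (Y - w) + f Y) - K * (1 + Y) * w ^ 3)
        = f (Y - w) + f Y - L * (1 + Y) := by
      linear_combination ((f (Y - w) + f Y) / 4 - K * (1 + Y) * w ^ 2 / 2) * hεw
    have := mul_le_mul_of_nonneg_left htrap (by positivity : 0 ≤ ε / 2)
    nlinarith [hC (Y - w)]
  have hamgm : L * (Y - r) ≤ ε * δ / 4 * (Y - r) ^ 2 + L ^ 2 / (ε * δ) := by
    have : ε * δ / 4 * (Y - r) ^ 2 + L ^ 2 / (ε * δ) - L * (Y - r)
        = ε * δ / 4 * (Y - r - 2 * L / (ε * δ)) ^ 2 := by field_simp; ring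
    nlinarith [this, sq_nonneg (Y - r - 2 * L / (ε * δ)), mul_pos hε hδ]
  have := mul_le_mul_of_nonneg_left hFY (by positivity : 0 ≤ ε / 2)
  linarith

theorem exists_le_mul_integral_add {f : ℝ → ℝ} (hf : Differentiable ℝ f)
    (hf' : Differentiable ℝ (deriv f)) {δ R K ε : ℝ} (hδ : 0 < δ) (hR : 0 ≤ R)
    (hderiv : ∀ s, R ≤ |s| → δ ≤ deriv f s)
    (hgrowth : ∀ y, |deriv (deriv f) y| ≤ K * (1 + |y|)) (hε : 0 < ε) :
    ∃ c, ∀ y, f y ≤ ε * (∫ s in (0:ℝ)..y, f s) + c := by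
  obtain ⟨b, hRb, hright⟩ := exists_mul_sub_le_of_le_deriv hf hδ
    fun s hs => hderiv s (hs.trans (le_abs_self s))
  obtain ⟨a, haR, hleft⟩ := exists_le_mul_sub_of_le_deriv (R := -R) hf hδ
    fun s hs => hderiv s (by rw [abs_of_nonpos (by linarith)]; linarith)
  have hneg : ∀ y, y ≤ a → f y ≤ 0 := fun y hy =>
    (hleft y hy).trans (mul_nonpos_of_nonneg_of_nonpos hδ.le (by linarith))
  have hpos : ∀ y, b ≤ y → 0 ≤ f y := fun y hy =>
    (mul_nonneg hδ.le (by linarith)).trans (hright y hy)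
  obtain ⟨C, hC⟩ :=
    bddBelow_range_integral_of_nonpos_of_nonneg hf.continuous (by linarith) hneg hpos
  have hC' : ∀ y, C ≤ ∫ s in (0:ℝ)..y, f s := fun y => hC ⟨y, rfl⟩
  obtain ⟨c, hc⟩ :=
    exists_le_mul_integral_add_of_le hf hf' hδ (hR.trans hRb) hright hgrowth hC' hε
  obtain ⟨B, hB⟩ := bddAbove_image_Iic_of_nonpos hf.continuous hneg (b + 4 / ε)
  refine ⟨max c (B - ε * C), fun y => ?_⟩
  rcases le_total (b + 4 / ε) y with hy | hy
  · linarith [hc y hy, le_max_left c (B - ε * C)]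
  · have := mul_le_mul_of_nonneg_left (hC' y) hε.le
    linarith [hB (mem_image_of_mem f hy), le_max_right c (B - ε * C)]

/-- Remark 2.1(3): under (H1)-(H3) with growth exponent `p ∈ [0,1]`, for every `ε > 0` there
is `c_ε > 0` with `|f(y)| ≤ ε F(y) + c_ε` for all `y`, where `F(y) = ∫₀^y f(s) ds`. -/
theorem remark_2_1_3 (f : ℝ → ℝ) (hf : ContDiff ℝ 2 f)
    (hdiss : ∃ δ > (0:ℝ), ∃ R > (0:ℝ), ∀ s : ℝ, R ≤ |s| → δ ≤ deriv f s)
    (c_f p : ℝ) (hcf : 0 < c_f) (hp0 : 0 ≤ p) (hp1 : p ≤ 1)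
    (hgrowth : ∀ y : ℝ, |deriv (deriv f) y| ≤ c_f * (1 + |y| ^ p)) :
    ∀ ε > (0:ℝ), ∃ c_ε > (0:ℝ), ∀ y : ℝ,
      |f y| ≤ ε * (∫ s in (0:ℝ)..y, f s) + c_ε := by
  intro ε hε
  obtain ⟨δ, hδ, R, hR, hderiv⟩ := hdiss
  have hd := hf.differentiable two_ne_zero
  have hd' := hf.differentiable_deriv_two
  have hlin : ∀ y, |deriv (deriv f) y| ≤ 2 * c_f * (1 + |y|) := fun y =>
    (hgrowth y).trans (by
      nlinarith [mul_le_mul_of_nonneg_left (Real.rpow_le_one_add (abs_nonneg y) hp0 hp1) hcf.le,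
        abs_nonneg y])
  obtain ⟨c₁, hc₁⟩ := exists_le_mul_integral_add hd hd' hδ hR.le hderiv hlin hε
  obtain ⟨c₂, hc₂⟩ := exists_le_mul_integral_add (f := fun y => -f (-y)) (K := 2 * c_f)
    (hd.comp differentiable_neg).neg
    (by rw [deriv_neg_comp_neg]; exact hd'.comp differentiable_neg) hδ hR.le
    (fun s hs => by rw [deriv_neg_comp_neg]; exact hderiv (-s) (by rwa [abs_neg]))
    (fun y => by rw [deriv_deriv_neg_comp_neg, abs_neg, ← abs_neg y]; exact hlin (-y)) hε
  refine ⟨max (max c₁ c₂) 1, by positivity, fun y => abs_le.2 ⟨?_, ?_⟩⟩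
  · have := hc₂ (-y)
    rw [integral_neg_comp_neg, neg_neg] at this
    linarith [le_max_right c₁ c₂, le_max_left (max c₁ c₂) 1]
  · linarith [hc₁ y, le_max_left c₁ c₂, le_max_left (max c₁ c₂) 1]
end
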